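/- Let m, n be positive integers and h a norm on ℝ^m with generated norm H on ℝ^{m×n}. For every finite ℝ^{m×n}-valued Borel measure F on ℝ^n, the h-mass of F in the sense of Federer–Fleming equals the total variation of F with respect to H: sup { ∫ ω : dF : ω ∈ C_c^∞(ℝ^n; ℝ^{m×n}) with sup_{x ∈ ℝ^n} sup_{|u| ≤ 1} h_*(ω(x) u) ≤ 1 } = |F|_H, where ∫ ω : dF denotes the entrywise integral Σ_{i,j} ∫ ω_{ij} dF_{ij}. -/

import Mathlib

open MeasureTheory

noncomputable section

/-- `ℝ^n` with the Euclidean norm. -/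
abbrev Euc (n : ℕ) := EuclideanSpace ℝ (Fin n)

/-- `h` is a norm on `ℝ^m`. -/
def IsNorm {m : ℕ} (h : (Fin m → ℝ) → ℝ) : Prop :=
  (∀ x y, h (x + y) ≤ h x + h y) ∧ (∀ (c : ℝ) (x), h (c • x) = |c| * h x) ∧
    ∀ x, h x = 0 → x = 0

/-- The dual norm `h_*` of `h`: `h_*(g) = sup { g·θ : h θ ≤ 1 }`. -/
def dualNorm {m : ℕ} (h : (Fin m → ℝ) → ℝ) (g : Fin m → ℝ) : ℝ :=
  sSup {r | ∃ θ : Fin m → ℝ, h θ ≤ 1 ∧ r = ∑ i, g i * θ i}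

/-- Matrix-vector product `M u`. -/
def matVec {m n : ℕ} (M : Fin m → Fin n → ℝ) (u : Euc n) : Fin m → ℝ :=
  fun i => ∑ j, M i j * u j

/-- Frobenius inner product `M : N`. -/
def frob {m n : ℕ} (M N : Fin m → Fin n → ℝ) : ℝ := ∑ i, ∑ j, M i j * N i j

/-- `M ∈ ∂H(0)`, i.e. `h_*(M u) ≤ 1` for all `|u| ≤ 1`. -/
def inSubdiffH {m n : ℕ} (h : (Fin m → ℝ) → ℝ) (M : Fin m → Fin n → ℝ) : Prop :=
  ∀ u : Euc n, ‖u‖ ≤ 1 → dualNorm h (matVec M u) ≤ 1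

/-- The norm `H` on `ℝ^{m×n}` generated by `h`:
`H(N) = sup { M:N : M ∈ ∂H(0) }`. -/
def genNorm {m n : ℕ} (h : (Fin m → ℝ) → ℝ) (N : Fin m → Fin n → ℝ) : ℝ :=
  sSup {r | ∃ M : Fin m → Fin n → ℝ, inSubdiffH h M ∧ r = frob M N}

/-- The rank-one matrix `θ ⊗ e`. -/
def outer {m n : ℕ} (θ : Fin m → ℝ) (e : Euc n) : Fin m → Fin n → ℝ :=
  fun i j => θ i * e j

/-- An `ℝ^{m×n}`-valued Borel measure on `ℝ^n`, given by its component signed measures. -/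
abbrev MatMeas (m n : ℕ) := Fin m → Fin n → MeasureTheory.SignedMeasure (Euc n)

/-- An `ℝ^m`-valued Borel measure on `ℝ^n`, given by its component signed measures. -/
abbrev VecMeas (m n : ℕ) := Fin m → MeasureTheory.SignedMeasure (Euc n)

/-- Integral of a function against a signed measure (via the Jordan decomposition). -/
def sInt {n : ℕ} (ν : MeasureTheory.SignedMeasure (Euc n)) (f : Euc n → ℝ) : ℝ :=
  ∫ x, f x ∂ν.toJordanDecomposition.posPart - ∫ x, f x ∂ν.toJordanDecomposition.negPart

/-- The total variation `|F|_H` of `F` with respect to the norm `H` generated by `h`: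
the supremum of `Σ_k H(F(B_k))` over countable Borel partitions `(B_k)` of `ℝ^n`. -/
def tvH {m n : ℕ} (h : (Fin m → ℝ) → ℝ) (F : MatMeas m n) : ℝ :=
  sSup {r | ∃ B : ℕ → Set (Euc n), (∀ k, MeasurableSet (B k)) ∧
    Pairwise (Function.onFun Disjoint B) ∧ (⋃ k, B k) = Set.univ ∧
    r = ∑' k, genNorm h (fun i j => F i j (B k))}

/-- `F` is supported in `K`: it vanishes on Borel sets disjoint from `K`. -/
def suppIn {m n : ℕ} (F : MatMeas m n) (K : Set (Euc n)) : Prop :=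
  ∀ B : Set (Euc n), MeasurableSet B → Disjoint B K → ∀ i j, F i j B = 0

/-- `F` is compactly supported. -/
def suppInCpt {m n : ℕ} (F : MatMeas m n) : Prop :=
  ∃ K : Set (Euc n), IsCompact K ∧ suppIn F K

/-- `F₀` is compactly supported. -/
def vSuppInCpt {m n : ℕ} (F0 : VecMeas m n) : Prop :=
  ∃ K : Set (Euc n), IsCompact K ∧
    ∀ B : Set (Euc n), MeasurableSet B → Disjoint B K → ∀ i, F0 i B = 0

/-- The Jacobian matrix `Dψ(x) ∈ ℝ^{m×n}` of `ψ : ℝ^n → ℝ^m`. -/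
def jac {m n : ℕ} (ψ : Euc n → (Fin m → ℝ)) (x : Euc n) : Fin m → Fin n → ℝ :=
  fun i j => fderiv ℝ ψ x (EuclideanSpace.single j 1) i

/-- `∂F = F₀`, i.e. `∫ Dψ : dF = ∫ ψ · dF₀` for all smooth compactly supported `ψ`. -/
def isBoundary {m n : ℕ} (F : MatMeas m n) (F0 : VecMeas m n) : Prop :=
  ∀ ψ : Euc n → (Fin m → ℝ), ContDiff ℝ (⊤ : ℕ∞) ψ → HasCompactSupport ψ →
    (∑ i, ∑ j, sInt (F i j) fun x => jac ψ x i j) = ∑ i, sInt (F0 i) fun x => ψ x i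

/-- `φ` is an admissible dual potential: `h_*(φ(y) - φ(x)) ≤ |y - x|`. -/
def admissible {m n : ℕ} (h : (Fin m → ℝ) → ℝ) (φ : Euc n → Fin m → ℝ) : Prop :=
  ∀ x y : Euc n, dualNorm h (φ y - φ x) ≤ ‖y - x‖

/-- The dual objective `∫ φ · dF₀`. -/
def intDual {m n : ℕ} (F0 : VecMeas m n) (φ : Euc n → Fin m → ℝ) : ℝ :=
  ∑ i, sInt (F0 i) fun x => φ x i


/-!
Both sides are suprema of `∫ ω : dF` over fields `ω` with values in `∂H(0)`: smooth compactly
supported ones on the left, fields constant on the pieces of a Borel partition on the right (for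
such a field the integral is `Σ M_k : F(B_k) ≤ Σ H(F(B_k))`, with equality up to `ε` for a good
choice of `M_k ∈ ∂H(0)`).

`≤`: a continuous compactly supported `ω` is uniformly close to a field that is constant on the
pieces of a finite partition, with values taken by `ω`.

`≥`: given `B_k` and `M_k`, truncate to finitely many `k`, shrink `B_k` to a compact `C_k` and
enlarge it to an open `U_k` with small `|F|(U_k \ C_k)` (regularity of finite Borel measures on
`ℝ^n`), and replace the indicator of `B_k` by a smooth bump that is `1` on `C_k` and supported in
`U_k`. Since the `C_k` are disjoint compacts the bumps can be given disjoint supports, so the glued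
field `Σ f_k M_k` takes values `t M_k` with `t ∈ [0, 1]`, which stay in the convex set `∂H(0)`
since it contains `0`.

Finiteness of the dual norm, hence boundedness of `∂H(0)`, comes from `h` dominating a multiple of
the sup norm, by compactness of the unit sphere.
-/

open Set Metric
open scoped Manifold

/-- Bounds every entry of a matrix in `∂H(0)`, and is a Lipschitz constant of `h`. -/
def basisNormSum {m : ℕ} (h : (Fin m → ℝ) → ℝ) : ℝ := ∑ i, h (Pi.single i 1)

namespace IsNorm

variable {m : ℕ} {h : (Fin m → ℝ) → ℝ}

lemma map_zero (hh : IsNorm h) : h 0 = 0 := by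
  simpa using hh.2.1 0 0

lemma map_neg (hh : IsNorm h) (x : Fin m → ℝ) : h (-x) = h x := by
  simpa using hh.2.1 (-1) x

lemma nonneg (hh : IsNorm h) (x : Fin m → ℝ) : 0 ≤ h x := by
  have := hh.1 x (-x)
  rw [add_neg_cancel, hh.map_zero, hh.map_neg] at this
  linarith

lemma pos (hh : IsNorm h) {x : Fin m → ℝ} (hx : x ≠ 0) : 0 < h x :=
  (hh.nonneg x).lt_of_ne fun h0 => hx (hh.2.2 x h0.symm)

lemma sub_le_map_sub (hh : IsNorm h) (x y : Fin m → ℝ) : h x - h y ≤ h (x - y) := by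
  linarith [sub_add_cancel x y ▸ hh.1 (x - y) y]

lemma basisNormSum_nonneg (hh : IsNorm h) : 0 ≤ basisNormSum h :=
  Finset.sum_nonneg fun _ _ => hh.nonneg _

lemma le_basisNormSum (hh : IsNorm h) (i : Fin m) : h (Pi.single i 1) ≤ basisNormSum h :=
  Finset.single_le_sum (fun j _ => hh.nonneg (Pi.single j 1)) (Finset.mem_univ i)

lemma le_basisNormSum_mul_norm (hh : IsNorm h) (x : Fin m → ℝ) :
    h x ≤ basisNormSum h * ‖x‖ := by
  calc h x = h (∑ i, x i • Pi.single i 1) := by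
        congr 1; ext j; simp [Finset.sum_apply, Pi.single_apply]
    _ ≤ ∑ i, h (x i • Pi.single i 1) :=
        Finset.le_sum_of_subadditive h hh.map_zero.le hh.1 _ _
    _ ≤ ∑ i, ‖x‖ * h (Pi.single i 1) := Finset.sum_le_sum fun i _ => by
        rw [hh.2.1, ← Real.norm_eq_abs]
        exact mul_le_mul_of_nonneg_right (norm_le_pi_norm x i) (hh.nonneg _)
    _ = basisNormSum h * ‖x‖ := by rw [basisNormSum, Finset.sum_mul]; simp_rw [mul_comm]

lemma continuous (hh : IsNorm h) : Continuous h := by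
  refine (LipschitzWith.of_dist_le' (K := basisNormSum h) fun x y => ?_).continuous
  rw [Real.dist_eq, dist_eq_norm, abs_sub_le_iff]
  have hyx : h (y - x) = h (x - y) := by rw [← neg_sub, hh.map_neg]
  constructor <;>
    linarith [hh.sub_le_map_sub x y, hh.sub_le_map_sub y x, hh.le_basisNormSum_mul_norm (x - y)]

lemma exists_pos_mul_norm_le (hh : IsNorm h) : ∃ c > 0, ∀ x, c * ‖x‖ ≤ h x := by
  -- `c` is a positive lower bound of `h` on the unit sphere
  obtain ⟨c, hc, hcle⟩ := (isCompact_sphere (0 : Fin m → ℝ) 1).exists_forall_le'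
    hh.continuous.continuousOn (a := 0) fun x hx => hh.pos (ne_zero_of_mem_unit_sphere ⟨x, hx⟩)
  refine ⟨c, hc, fun x => ?_⟩
  rcases eq_or_ne x 0 with rfl | hx
  · simp [hh.map_zero]
  have hxpos : 0 < ‖x‖ := norm_pos_iff.2 hx
  have := hcle (‖x‖⁻¹ • x) (by simp [norm_smul, hxpos.ne'])
  rwa [hh.2.1, abs_inv, abs_norm, le_inv_mul_iff₀ hxpos, mul_comm] at this

lemma bddAbove_dualNorm_set (hh : IsNorm h) (g : Fin m → ℝ) :
    BddAbove {r | ∃ θ : Fin m → ℝ, h θ ≤ 1 ∧ r = ∑ i, g i * θ i} := by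
  obtain ⟨c, hc, hch⟩ := hh.exists_pos_mul_norm_le
  refine ⟨(∑ i, |g i|) * c⁻¹, ?_⟩
  rintro _ ⟨θ, hθ, rfl⟩
  have hθc : ‖θ‖ ≤ c⁻¹ := by
    rw [← one_div, le_div_iff₀' hc]
    linarith [hch θ]
  rw [Finset.sum_mul]
  refine Finset.sum_le_sum fun i _ => (le_abs_self _).trans ?_
  rw [abs_mul, ← Real.norm_eq_abs (θ i)]
  exact mul_le_mul_of_nonneg_left ((norm_le_pi_norm θ i).trans hθc) (abs_nonneg _)

end IsNorm

section DualNorm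

variable {m n : ℕ} {h : (Fin m → ℝ) → ℝ}

lemma le_dualNorm (hh : IsNorm h) {θ : Fin m → ℝ} (hθ : h θ ≤ 1) (g : Fin m → ℝ) :
    ∑ i, g i * θ i ≤ dualNorm h g :=
  le_csSup (hh.bddAbove_dualNorm_set g) ⟨θ, hθ, rfl⟩

lemma dualNorm_le (hh : IsNorm h) {g : Fin m → ℝ} {a : ℝ}
    (ha : ∀ θ : Fin m → ℝ, h θ ≤ 1 → ∑ i, g i * θ i ≤ a) : dualNorm h g ≤ a :=
  csSup_le ⟨0, 0, by simp [hh.map_zero]⟩ fun _ ⟨θ, hθ, hr⟩ => hr ▸ ha θ hθ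

lemma dualNorm_smul_le (hh : IsNorm h) {t : ℝ} (ht : 0 ≤ t) (g : Fin m → ℝ) :
    dualNorm h (t • g) ≤ t * dualNorm h g :=
  dualNorm_le hh fun θ hθ => by
    simpa [Finset.mul_sum, mul_assoc] using mul_le_mul_of_nonneg_left (le_dualNorm hh hθ g) ht

lemma abs_apply_le_mul_dualNorm (hh : IsNorm h) (g : Fin m → ℝ) (i : Fin m) :
    |g i| ≤ h (Pi.single i 1) * dualNorm h g := by
  have he : 0 < h (Pi.single i 1) := hh.pos (by simp)
  -- test against `θ = ±e_i / h(e_i)`, which lies in the unit ball of `h`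
  have key : ∀ σ : ℝ, |σ| = 1 → σ * g i ≤ h (Pi.single i 1) * dualNorm h g := fun σ hσ => by
    have hθ : h ((σ / h (Pi.single i 1)) • Pi.single i 1) ≤ 1 := by
      rw [hh.2.1, abs_div, hσ, abs_of_pos he, one_div_mul_cancel he.ne']
    have := le_dualNorm hh hθ g
    simp only [Pi.smul_apply, Pi.single_apply, smul_eq_mul, mul_ite, mul_one, mul_zero,
      Finset.sum_ite_eq', Finset.mem_univ, if_true] at this
    calc σ * g i = h (Pi.single i 1) * (g i * (σ / h (Pi.single i 1))) := by field_simp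
      _ ≤ _ := mul_le_mul_of_nonneg_left this he.le
  rw [abs_le']
  exact ⟨by simpa using key 1 (by simp), by simpa using key (-1) (by simp)⟩

lemma inSubdiffH_zero (hh : IsNorm h) : inSubdiffH h (0 : Fin m → Fin n → ℝ) :=
  fun _ _ => (dualNorm_le hh fun θ _ => by simp [matVec]).trans zero_le_one

lemma inSubdiffH_smul (hh : IsNorm h) {t : ℝ} (ht : t ∈ Icc (0 : ℝ) 1)
    {M : Fin m → Fin n → ℝ} (hM : inSubdiffH h M) : inSubdiffH h (t • M) := fun u hu => by
  have : matVec (t • M) u = t • matVec M u := by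
    ext i; simp [matVec, Finset.mul_sum, mul_assoc]
  rw [this]
  exact (dualNorm_smul_le hh ht.1 _).trans
    ((mul_le_mul_of_nonneg_left (hM u hu) ht.1).trans (by simpa using ht.2))

lemma abs_apply_le_of_inSubdiffH (hh : IsNorm h) {M : Fin m → Fin n → ℝ}
    (hM : inSubdiffH h M) (i : Fin m) (j : Fin n) : |M i j| ≤ basisNormSum h := by
  have hu : ‖(EuclideanSpace.single j 1 : Euc n)‖ ≤ 1 := by simp
  have hMu : matVec M (EuclideanSpace.single j 1) i = M i j := by
    simp [matVec]
  calc |M i j| ≤ h (Pi.single i 1) * dualNorm h (matVec M (EuclideanSpace.single j 1)) :=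
        hMu ▸ abs_apply_le_mul_dualNorm hh _ i
    _ ≤ h (Pi.single i 1) * 1 := mul_le_mul_of_nonneg_left (hM _ hu) (hh.nonneg _)
    _ ≤ basisNormSum h := by simpa using hh.le_basisNormSum i

lemma inSubdiffH_sum_smul (hh : IsNorm h) {ι : Type*} {s : Finset ι} {t : ι → ℝ}
    {M : ι → Fin m → Fin n → ℝ} (hM : ∀ k, inSubdiffH h (M k)) (ht : ∀ k, t k ∈ Icc (0 : ℝ) 1)
    (hst : ∀ k ∈ s, ∀ l ∈ s, t k ≠ 0 → t l ≠ 0 → k = l) : inSubdiffH h (∑ k ∈ s, t k • M k) := by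
  by_cases hex : ∃ k ∈ s, t k ≠ 0
  · obtain ⟨k, hk, htk⟩ := hex
    rw [Finset.sum_eq_single_of_mem k hk fun l hl hlk => by
      rw [not_imp_comm.1 (hst l hl k hk · htk) hlk, zero_smul]]
    exact inSubdiffH_smul hh (ht k) (hM k)
  · push Not at hex
    rw [Finset.sum_eq_zero fun k hk => by rw [hex k hk, zero_smul]]
    exact inSubdiffH_zero hh

end DualNorm

section GenNorm

variable {m n : ℕ} {h : (Fin m → ℝ) → ℝ}

lemma frob_le_of_inSubdiffH (hh : IsNorm h) {M : Fin m → Fin n → ℝ} (hM : inSubdiffH h M)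
    (N : Fin m → Fin n → ℝ) : frob M N ≤ basisNormSum h * ∑ i, ∑ j, |N i j| := by
  simp only [frob, Finset.mul_sum]
  refine Finset.sum_le_sum fun i _ => Finset.sum_le_sum fun j _ => ?_
  calc M i j * N i j ≤ |M i j| * |N i j| := (le_abs_self _).trans (abs_mul _ _).le
    _ ≤ _ := mul_le_mul_of_nonneg_right (abs_apply_le_of_inSubdiffH hh hM i j) (abs_nonneg _)

lemma bddAbove_genNorm_set (hh : IsNorm h) (N : Fin m → Fin n → ℝ) :
    BddAbove {r | ∃ M : Fin m → Fin n → ℝ, inSubdiffH h M ∧ r = frob M N} :=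
  ⟨_, fun _ ⟨_, hM, hr⟩ => hr ▸ frob_le_of_inSubdiffH hh hM N⟩

lemma frob_le_genNorm (hh : IsNorm h) {M : Fin m → Fin n → ℝ} (hM : inSubdiffH h M)
    (N : Fin m → Fin n → ℝ) : frob M N ≤ genNorm h N :=
  le_csSup (bddAbove_genNorm_set hh N) ⟨M, hM, rfl⟩

lemma genNorm_le_sum_abs (hh : IsNorm h) (N : Fin m → Fin n → ℝ) :
    genNorm h N ≤ basisNormSum h * ∑ i, ∑ j, |N i j| :=
  csSup_le ⟨0, 0, inSubdiffH_zero hh, by simp [frob]⟩ fun _ ⟨_, hM, hr⟩ =>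
    hr ▸ frob_le_of_inSubdiffH hh hM N

lemma genNorm_nonneg (hh : IsNorm h) (N : Fin m → Fin n → ℝ) : 0 ≤ genNorm h N := by
  simpa [frob] using frob_le_genNorm hh (inSubdiffH_zero hh) N

lemma genNorm_zero (hh : IsNorm h) : genNorm h (0 : Fin m → Fin n → ℝ) = 0 :=
  le_antisymm (by simpa using genNorm_le_sum_abs hh 0) (genNorm_nonneg hh 0)

lemma exists_lt_frob (hh : IsNorm h) (N : Fin m → Fin n → ℝ) {a : ℝ} (ha : a < genNorm h N) :
    ∃ M, inSubdiffH h M ∧ a < frob M N := by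
  have hne : {r | ∃ M, inSubdiffH h M ∧ r = frob M N}.Nonempty :=
    ⟨0, 0, inSubdiffH_zero hh, by simp [frob]⟩
  obtain ⟨_, ⟨M, hM, rfl⟩, hlt⟩ := exists_lt_of_lt_csSup hne ha
  exact ⟨M, hM, hlt⟩

end GenNorm

section SignedIntegral

variable {n : ℕ} {ν : SignedMeasure (Euc n)}

lemma sInt_sub {f g : Euc n → ℝ} (hf : Integrable f ν.totalVariation)
    (hg : Integrable g ν.totalVariation) :
    sInt ν (fun x => f x - g x) = sInt ν f - sInt ν g := by
  rw [SignedMeasure.totalVariation, integrable_add_measure] at hf hg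
  simp only [sInt, integral_sub hf.1 hg.1, integral_sub hf.2 hg.2]
  ring

lemma abs_sInt_le {f : Euc n → ℝ} {E : Set (Euc n)} {c : ℝ} (hE : ∀ x ∉ E, f x = 0)
    (hc : ∀ x, |f x| ≤ c) : |sInt ν f| ≤ c * ν.totalVariation.real E := by
  have key : ∀ (μ : Measure (Euc n)) [IsFiniteMeasure μ], |∫ x, f x ∂μ| ≤ c * μ.real E :=
    fun μ _ => by
      rw [← setIntegral_eq_integral_of_forall_compl_eq_zero hE]
      exact norm_setIntegral_le_of_norm_le_const (measure_lt_top _ _) fun x _ =>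
        (Real.norm_eq_abs _).trans_le (hc x)
  rw [SignedMeasure.totalVariation, measureReal_add_apply, mul_add]
  exact (abs_sub _ _).trans (add_le_add (key _) (key _))

lemma sInt_sum_indicator_mul {ι : Type*} (s : Finset ι) {B : ι → Set (Euc n)}
    (hB : ∀ k, MeasurableSet (B k)) (a : ι → ℝ) :
    sInt ν (fun x => ∑ k ∈ s, (B k).indicator 1 x * a k) = ∑ k ∈ s, ν (B k) * a k := by
  have key : ∀ (μ : Measure (Euc n)) [IsFiniteMeasure μ],
      ∫ x, ∑ k ∈ s, (B k).indicator 1 x * a k ∂μ = ∑ k ∈ s, μ.real (B k) * a k := fun μ _ => by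
    rw [integral_finsetSum _ fun k _ => ((integrable_const 1).indicator (hB k)).mul_const _]
    simp only [integral_mul_const, integral_indicator_one (hB _)]
  simp only [sInt, key, ν.apply_eq_posPart_real_sub_negPart_real (hB _), sub_mul,
    Finset.sum_sub_distrib]

end SignedIntegral

section MatrixIntegral

variable {m n : ℕ} {h : (Fin m → ℝ) → ℝ}

/-- `∫ ω : dF`. -/
def frobInt (F : MatMeas m n) (ω : Euc n → Fin m → Fin n → ℝ) : ℝ :=
  ∑ i, ∑ j, sInt (F i j) fun x => ω x i j

/-- Dominates the variation of every entry of `F`; it stands in for `|F|`. -/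
def totalVar (F : MatMeas m n) : Measure (Euc n) :=
  ∑ i, ∑ j, (F i j).totalVariation

instance (F : MatMeas m n) : IsFiniteMeasure (totalVar F) := by
  unfold totalVar; infer_instance

lemma totalVar_real (F : MatMeas m n) (E : Set (Euc n)) :
    (totalVar F).real E = ∑ i, ∑ j, (F i j).totalVariation.real E := by
  simp only [totalVar, Measure.real, Measure.coe_finsetSum, Finset.sum_apply]
  rw [ENNReal.toReal_sum fun i _ => ENNReal.sum_ne_top.2 fun j _ => measure_ne_top _ _]
  exact Finset.sum_congr rfl fun i _ => ENNReal.toReal_sum fun j _ => measure_ne_top _ _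

lemma integrable_apply_of_inSubdiffH (hh : IsNorm h) {ω : Euc n → Fin m → Fin n → ℝ}
    (hω : Measurable ω) (ha : ∀ x, inSubdiffH h (ω x)) (μ : Measure (Euc n)) [IsFiniteMeasure μ]
    (i : Fin m) (j : Fin n) : Integrable (fun x => ω x i j) μ :=
  .of_bound (hω.eval.eval).aestronglyMeasurable (basisNormSum h)
    (ae_of_all _ fun x => abs_apply_le_of_inSubdiffH hh (ha x) i j)

lemma abs_frobInt_sub_le (F : MatMeas m n) {ω ω' : Euc n → Fin m → Fin n → ℝ}
    (hω : ∀ i j, Integrable (fun x => ω x i j) (F i j).totalVariation)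
    (hω' : ∀ i j, Integrable (fun x => ω' x i j) (F i j).totalVariation)
    {E : Set (Euc n)} {c : ℝ} (hE : ∀ x ∉ E, ω x = ω' x) (hc : ∀ x i j, |ω x i j - ω' x i j| ≤ c) :
    |frobInt F ω - frobInt F ω'| ≤ c * (totalVar F).real E := by
  rw [frobInt, frobInt, ← Finset.sum_sub_distrib, totalVar_real, Finset.mul_sum]
  refine (Finset.abs_sum_le_sum_abs _ _).trans (Finset.sum_le_sum fun i _ => ?_)
  rw [← Finset.sum_sub_distrib, Finset.mul_sum]
  refine (Finset.abs_sum_le_sum_abs _ _).trans (Finset.sum_le_sum fun j _ => ?_)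
  rw [← sInt_sub (hω i j) (hω' i j)]
  exact abs_sInt_le (fun x hx => by simp [hE x hx]) (hc · i j)

lemma frobInt_sum_indicator_smul (F : MatMeas m n) {ι : Type*} (s : Finset ι)
    {B : ι → Set (Euc n)} (hB : ∀ k, MeasurableSet (B k)) (M : ι → Fin m → Fin n → ℝ) :
    frobInt F (fun x => ∑ k ∈ s, (B k).indicator (1 : Euc n → ℝ) x • M k)
      = ∑ k ∈ s, frob (M k) (fun i j => F i j (B k)) := by
  simp only [frobInt, frob, Finset.sum_apply, Pi.smul_apply, smul_eq_mul,
    sInt_sum_indicator_mul s hB]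
  calc _ = ∑ i, ∑ k ∈ s, ∑ j, F i j (B k) * M k i j :=
        Finset.sum_congr rfl fun i _ => Finset.sum_comm
    _ = _ := by rw [Finset.sum_comm]; simp_rw [mul_comm]

end MatrixIntegral

section TotalVariationH

variable {m n : ℕ} {h : (Fin m → ℝ) → ℝ}

lemma genNorm_apply_le (hh : IsNorm h) (F : MatMeas m n) (B : Set (Euc n)) :
    genNorm h (fun i j => F i j B) ≤ basisNormSum h * (totalVar F).real B := by
  refine (genNorm_le_sum_abs hh _).trans ?_
  rw [totalVar_real]
  exact mul_le_mul_of_nonneg_left (Finset.sum_le_sum fun i _ => Finset.sum_le_sum fun j _ =>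
    (Real.norm_eq_abs _).symm.trans_le ((F i j).norm_le_totalVariation B)) hh.basisNormSum_nonneg

lemma summable_genNorm (hh : IsNorm h) (F : MatMeas m n) {B : ℕ → Set (Euc n)}
    (hBm : ∀ k, MeasurableSet (B k)) (hBd : Pairwise (Function.onFun Disjoint B)) :
    Summable fun k => genNorm h (fun i j => F i j (B k)) :=
  .of_nonneg_of_le (fun _ => genNorm_nonneg hh _) (fun k => genNorm_apply_le hh F (B k))
    ((summable_measure_toReal hBm hBd).mul_left _)

lemma tsum_genNorm_le (hh : IsNorm h) (F : MatMeas m n) {B : ℕ → Set (Euc n)}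
    (hBm : ∀ k, MeasurableSet (B k)) (hBd : Pairwise (Function.onFun Disjoint B)) :
    ∑' k, genNorm h (fun i j => F i j (B k)) ≤ basisNormSum h * (totalVar F).real univ := by
  have hsum := (summable_measure_toReal (μ := totalVar F) hBm hBd).mul_left (basisNormSum h)
  have hunion : ∑' k, (totalVar F).real (B k) ≤ (totalVar F).real univ := by
    simp only [measureReal_def]
    rw [← ENNReal.tsum_toReal_eq fun k => measure_ne_top _ _, ← measure_iUnion hBd hBm]
    exact ENNReal.toReal_mono (measure_ne_top _ _) (measure_mono (subset_univ _))
  calc ∑' k, genNorm h (fun i j => F i j (B k)) ≤ ∑' k, basisNormSum h * (totalVar F).real (B k) :=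
        (summable_genNorm hh F hBm hBd).tsum_le_tsum (fun k => genNorm_apply_le hh F (B k)) hsum
    _ = basisNormSum h * ∑' k, (totalVar F).real (B k) := tsum_mul_left
    _ ≤ basisNormSum h * (totalVar F).real univ :=
        mul_le_mul_of_nonneg_left hunion hh.basisNormSum_nonneg

lemma bddAbove_tvH_set (hh : IsNorm h) (F : MatMeas m n) :
    BddAbove {r | ∃ B : ℕ → Set (Euc n), (∀ k, MeasurableSet (B k)) ∧
      Pairwise (Function.onFun Disjoint B) ∧ (⋃ k, B k) = Set.univ ∧
      r = ∑' k, genNorm h (fun i j => F i j (B k))} :=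
  ⟨_, fun _ ⟨_, hBm, hBd, _, hr⟩ => hr ▸ tsum_genNorm_le hh F hBm hBd⟩

lemma tvH_set_nonempty (F : MatMeas m n) :
    {r | ∃ B : ℕ → Set (Euc n), (∀ k, MeasurableSet (B k)) ∧
      Pairwise (Function.onFun Disjoint B) ∧ (⋃ k, B k) = Set.univ ∧
      r = ∑' k, genNorm h (fun i j => F i j (B k))}.Nonempty :=
  ⟨_, disjointed fun _ => univ, MeasurableSet.disjointed fun _ => .univ, disjoint_disjointed _,
    by rw [iUnion_disjointed, iUnion_const], rfl⟩

lemma sum_genNorm_le_tvH (hh : IsNorm h) (F : MatMeas m n) {D : ℕ → Set (Euc n)}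
    (hDm : ∀ k, MeasurableSet (D k)) (hDd : Pairwise (Function.onFun Disjoint D))
    (hDu : ⋃ k, D k = univ) {K : ℕ} (hK : ∀ k, K ≤ k → D k = ∅) :
    ∑ k ∈ Finset.range K, genNorm h (fun i j => F i j (D k)) ≤ tvH h F := by
  calc ∑ k ∈ Finset.range K, genNorm h (fun i j => F i j (D k))
      = ∑' k, genNorm h (fun i j => F i j (D k)) := (tsum_eq_sum fun k hk => by
        simp only [hK k (by simpa using hk), VectorMeasure.empty]
        exact genNorm_zero hh).symm
    _ ≤ tvH h F := le_csSup (bddAbove_tvH_set hh F) ⟨D, hDm, hDd, hDu, rfl⟩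

end TotalVariationH

/-- The pieces are `D k = f⁻¹(B(f(c k), ε)) \ ⋃_{l<k} f⁻¹(B(f(c l), ε))` for a dense sequence
`c`; compactness of the range leaves only finitely many nonempty ones. -/
lemma exists_finite_partition_dist_lt {X E : Type*} [TopologicalSpace X]
    [TopologicalSpace.SeparableSpace X] [Nonempty X] [MeasurableSpace X] [OpensMeasurableSpace X]
    [PseudoMetricSpace E] {f : X → E} (hf : Continuous f) (hr : IsCompact (range f)) {ε : ℝ}
    (hε : 0 < ε) :
    ∃ (D : ℕ → Set X) (c : ℕ → X) (K : ℕ), (∀ k, MeasurableSet (D k)) ∧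
      Pairwise (Function.onFun Disjoint D) ∧ ⋃ k, D k = univ ∧ (∀ k, K ≤ k → D k = ∅) ∧
      ∀ k, ∀ x ∈ D k, dist (f x) (f (c k)) < ε := by
  obtain ⟨c, hc⟩ := TopologicalSpace.exists_dense_seq X
  have hcover : range f ⊆ ⋃ k, ball (f (c k)) ε := by
    rintro _ ⟨x, rfl⟩
    obtain ⟨k, hk⟩ := hc.exists_mem_open (isOpen_ball.preimage hf) ⟨x, mem_ball_self hε⟩
    exact mem_iUnion.2 ⟨k, mem_ball_comm.1 hk⟩
  obtain ⟨t, ht⟩ := hr.elim_finite_subcover _ (fun _ => isOpen_ball) hcover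
  obtain ⟨K, hK⟩ := t.exists_nat_subset_range
  have hcK : ∀ x, ∃ k < K, f x ∈ ball (f (c k)) ε := fun x => by
    obtain ⟨k, hk, hx⟩ := mem_iUnion₂.1 (ht (mem_range_self x))
    exact ⟨k, Finset.mem_range.1 (hK hk), hx⟩
  refine ⟨disjointed fun k => f ⁻¹' ball (f (c k)) ε, c, K,
    MeasurableSet.disjointed fun k => (isOpen_ball.preimage hf).measurableSet,
    disjoint_disjointed _, ?_, fun k hk => ?_, fun k x hx => disjointed_subset _ k hx⟩
  · rw [iUnion_disjointed]
    exact eq_univ_of_forall fun x => mem_iUnion.2 (let ⟨k, _, hk⟩ := hcK x; ⟨k, hk⟩)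
  · refine eq_empty_of_forall_notMem fun x hx => ?_
    obtain ⟨l, hl, hxl⟩ := hcK x
    exact mem_iInter₂.1 ((disjointed_eq_inter_compl _ k).subset hx).2 l (hl.trans_le hk) hxl

section MassLeTotalVariation

variable {m n : ℕ} {h : (Fin m → ℝ) → ℝ}

lemma frobInt_le_tvH (hh : IsNorm h) (F : MatMeas m n) {ω : Euc n → Fin m → Fin n → ℝ}
    (hω : Continuous ω) (hc : HasCompactSupport ω) (ha : ∀ x, inSubdiffH h (ω x)) :
    frobInt F ω ≤ tvH h F := by
  set T := (totalVar F).real univ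
  refine le_of_forall_pos_le_add fun ε hε => ?_
  set δ := ε / (T + 1)
  have hT : 0 ≤ T := measureReal_nonneg
  obtain ⟨D, c, K, hDm, hDd, hDu, hDK, hDc⟩ :=
    exists_finite_partition_dist_lt hω (hc.isCompact_range hω) (by positivity : 0 < δ)
  have hmem : ∀ x, ∃ k < K, x ∈ D k := fun x => by
    obtain ⟨k, hk⟩ := mem_iUnion.1 (hDu.symm ▸ mem_univ x : x ∈ ⋃ k, D k)
    refine ⟨k, not_le.1 fun hKk => ?_, hk⟩
    simp [hDK k hKk] at hk
  set ω' := fun x => ∑ k ∈ Finset.range K, (D k).indicator (1 : Euc n → ℝ) x • ω (c k)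
  have hω' : ∀ k < K, ∀ x ∈ D k, ω' x = ω (c k) := fun k hk x hx => by
    simp only [ω']
    rw [Finset.sum_eq_single_of_mem k (Finset.mem_range.2 hk) fun l _ hlk => by
      rw [indicator_of_notMem ((hDd hlk).notMem_of_mem_right hx), zero_smul],
      indicator_of_mem hx, Pi.one_apply, one_smul]
  have ha' : ∀ x, inSubdiffH h (ω' x) := fun x => by
    obtain ⟨k, hk, hx⟩ := hmem x
    exact hω' k hk x hx ▸ ha _
  have hω'm : Measurable ω' := Finset.measurable_sum _ fun k _ =>
    (measurable_one.indicator (hDm k)).smul_const _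
  have hclose : ∀ x i j, |ω x i j - ω' x i j| ≤ δ := fun x i j => by
    obtain ⟨k, hk, hx⟩ := hmem x
    rw [hω' k hk x hx, ← Real.dist_eq]
    exact ((dist_le_pi_dist _ _ j).trans (dist_le_pi_dist _ _ i)).trans (hDc k x hx).le
  have hcomp := abs_frobInt_sub_le F
    (fun i j => integrable_apply_of_inSubdiffH hh hω.measurable ha _ i j)
    (fun i j => integrable_apply_of_inSubdiffH hh hω'm ha' _ i j) (E := univ)
    (fun x hx => absurd (mem_univ x) hx) hclose
  have hδT : δ * T ≤ ε := by
    calc δ * T ≤ δ * (T + 1) := by gcongr; linarith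
      _ = ε := div_mul_cancel₀ _ (by positivity)
  calc frobInt F ω ≤ frobInt F ω' + δ * T := by linarith [(abs_le.1 hcomp).2]
    _ = ∑ k ∈ Finset.range K, frob (ω (c k)) (fun i j => F i j (D k)) + δ * T := by
        rw [frobInt_sum_indicator_smul F _ hDm]
    _ ≤ ∑ k ∈ Finset.range K, genNorm h (fun i j => F i j (D k)) + δ * T := by
        gcongr with k; exact frob_le_genNorm hh (ha _) _
    _ ≤ tvH h F + ε := add_le_add (sum_genNorm_le_tvH hh F hDm hDd hDu hDK) hδT

end MassLeTotalVariation

/-- The neighbourhoods are the Voronoi cells `{x | d(x, C i) < d(x, C j) for j ∈ s, j ≠ i}`. -/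
lemma exists_isOpen_superset_pairwiseDisjoint {X ι : Type*} [PseudoEMetricSpace X]
    {C : ι → Set X} (hC : ∀ i, IsClosed (C i)) (hd : Pairwise (Function.onFun Disjoint C))
    (s : Finset ι) :
    ∃ V : ι → Set X, (∀ i, IsOpen (V i)) ∧ (∀ i, C i ⊆ V i) ∧ (s : Set ι).PairwiseDisjoint V := by
  classical
  refine ⟨fun i => ⋂ j ∈ s.erase i, {x | infEDist x (C i) < infEDist x (C j)},
    fun i => isOpen_biInter_finset fun j _ => isOpen_lt continuous_infEDist continuous_infEDist,
    fun i x hx => mem_iInter₂.2 fun j hj => ?_, fun i hi k hk hik => ?_⟩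
  · change infEDist x (C i) < infEDist x (C j)
    rw [infEDist_zero_of_mem hx, infEDist_pos_iff_notMem_closure, (hC j).closure_eq]
    exact disjoint_left.1 (hd (Finset.ne_of_mem_erase hj).symm) hx
  · refine disjoint_left.2 fun x hxi hxk => ?_
    have hlt : infEDist x (C i) < infEDist x (C k) :=
      mem_iInter₂.1 hxi k (Finset.mem_erase.2 ⟨hik.symm, hk⟩)
    have hgt : infEDist x (C k) < infEDist x (C i) :=
      mem_iInter₂.1 hxk i (Finset.mem_erase.2 ⟨hik, hi⟩)
    exact lt_asymm hlt hgt

lemma exists_contDiff_eqOn_one_of_isCompact_subset_isOpen {E : Type*} [NormedAddCommGroup E]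
    [NormedSpace ℝ E] [FiniteDimensional ℝ E] {C U : Set E} (hC : IsCompact C) (hU : IsOpen U)
    (hCU : C ⊆ U) :
    ∃ f : E → ℝ, ContDiff ℝ (⊤ : ℕ∞) f ∧ HasCompactSupport f ∧ (∀ x ∉ U, f x = 0) ∧
      EqOn f 1 C ∧ ∀ x, f x ∈ Icc (0 : ℝ) 1 := by
  obtain ⟨L, hL, hCL, hLU⟩ := exists_compact_between hC hU hCU
  obtain ⟨f, hf1, hf0, hf01⟩ :=
    exists_contMDiffMap_one_nhds_of_subset_interior 𝓘(ℝ, E) (n := ⊤) hC.isClosed hCL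
  exact ⟨f, contMDiff_iff_contDiff.1 f.contMDiff, HasCompactSupport.intro hL hf0,
    fun x hx => hf0 x fun hxL => hx (hLU hxL), fun x hx => hf1.self_of_nhdsSet x hx, hf01⟩

lemma exists_isCompact_isOpen_measureReal_sdiff_lt {X : Type*} [TopologicalSpace X]
    [MeasurableSpace X] [OpensMeasurableSpace X] [T2Space X] (μ : Measure X) [IsFiniteMeasure μ]
    [μ.OuterRegular] [μ.InnerRegularCompactLTTop] {B : Set X} (hB : MeasurableSet B) {η : ℝ}
    (hη : 0 < η) :
    ∃ C U, IsCompact C ∧ IsOpen U ∧ C ⊆ B ∧ B ⊆ U ∧ μ.real (U \ C) < η := by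
  have hη2 : ENNReal.ofReal (η / 2) ≠ 0 := (ENNReal.ofReal_pos.2 (half_pos hη)).ne'
  obtain ⟨C, hCB, hC, hBC⟩ := hB.exists_isCompact_sdiff_lt (measure_ne_top μ B) hη2
  obtain ⟨U, hBU, hU, -, hUB⟩ := hB.exists_isOpen_sdiff_lt (measure_ne_top μ B) hη2
  refine ⟨C, U, hC, hU, hCB, hBU, ?_⟩
  calc μ.real (U \ C) ≤ μ.real ((U \ B) ∪ (B \ C)) :=
        measureReal_mono fun x hx => by by_cases hxB : x ∈ B <;> simp_all
    _ ≤ μ.real (U \ B) + μ.real (B \ C) := measureReal_union_le _ _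
    _ < η / 2 + η / 2 := add_lt_add (ENNReal.toReal_lt_of_lt_ofReal hUB)
        (ENNReal.toReal_lt_of_lt_ofReal hBC)
    _ = η := add_halves η

/-- Shrink `B k` to a compact `C k` and enlarge it to an open `U k` with `μ(U k \ C k) < δ`, and
take bumps equal to `1` on `C k` supported in `U k` and in disjoint neighbourhoods of the `C k`. -/
lemma exists_smooth_approx_indicators {n : ℕ} (μ : Measure (Euc n)) [IsFiniteMeasure μ]
    {B : ℕ → Set (Euc n)} (hBm : ∀ k, MeasurableSet (B k))
    (hBd : Pairwise (Function.onFun Disjoint B)) (K : ℕ) {δ : ℝ} (hδ : 0 < δ) :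
    ∃ (f : ℕ → Euc n → ℝ) (S : Set (Euc n)), (∀ k, ContDiff ℝ (⊤ : ℕ∞) (f k)) ∧
      (∀ k, HasCompactSupport (f k)) ∧ (∀ k x, f k x ∈ Icc (0 : ℝ) 1) ∧
      (∀ x, ∀ k ∈ Finset.range K, ∀ l ∈ Finset.range K, f k x ≠ 0 → f l x ≠ 0 → k = l) ∧
      (∀ x ∉ S, ∀ k ∈ Finset.range K, f k x = (B k).indicator 1 x) ∧ μ.real S ≤ K * δ := by
  choose C U hC hU hCB hBU hUC using fun k =>
    exists_isCompact_isOpen_measureReal_sdiff_lt μ (hBm k) hδ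
  obtain ⟨V, hVo, hCV, hVd⟩ := exists_isOpen_superset_pairwiseDisjoint (fun k => (hC k).isClosed)
    (fun k l hkl => (hBd hkl).mono (hCB k) (hCB l)) (Finset.range K)
  choose f hfs hfc hf0 hf1 hf01 using fun k =>
    exists_contDiff_eqOn_one_of_isCompact_subset_isOpen (hC k) ((hU k).inter (hVo k))
      (subset_inter ((hCB k).trans (hBU k)) (hCV k))
  refine ⟨f, ⋃ k ∈ Finset.range K, U k \ C k, hfs, hfc, hf01,
    fun x k hk l hl hfk hfl => ?_, fun x hx k hk => ?_, ?_⟩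
  · by_contra hkl
    exact disjoint_left.1 (hVd hk hl hkl) (not_imp_comm.1 (hf0 k x) hfk).2
      (not_imp_comm.1 (hf0 l x) hfl).2
  · by_cases hxC : x ∈ C k
    · rw [hf1 k hxC, indicator_of_mem (hCB k hxC)]
    · have hxU : x ∉ U k := fun hxU => hx (mem_biUnion hk ⟨hxU, hxC⟩)
      rw [hf0 k x fun hxW => hxU hxW.1, indicator_of_notMem fun hxB => hxU (hBU k hxB)]
  · refine (measureReal_biUnion_finset_le _ _).trans ?_
    simpa using Finset.sum_le_sum fun k (_ : k ∈ Finset.range K) => (hUC k).le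

section TotalVariationLeMass

variable {m n : ℕ} {h : (Fin m → ℝ) → ℝ}

lemma exists_smooth_sum_frob_sub_le_frobInt (hh : IsNorm h) (F : MatMeas m n)
    {B : ℕ → Set (Euc n)} (hBm : ∀ k, MeasurableSet (B k))
    (hBd : Pairwise (Function.onFun Disjoint B)) (K : ℕ) {M : ℕ → Fin m → Fin n → ℝ}
    (hM : ∀ k, inSubdiffH h (M k)) {η : ℝ} (hη : 0 < η) :
    ∃ ω : Euc n → Fin m → Fin n → ℝ, ContDiff ℝ (⊤ : ℕ∞) ω ∧ HasCompactSupport ω ∧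
      (∀ x, inSubdiffH h (ω x)) ∧
      ∑ k ∈ Finset.range K, frob (M k) (fun i j => F i j (B k)) - η ≤ frobInt F ω := by
  set A := basisNormSum h
  have hA : 0 ≤ A := hh.basisNormSum_nonneg
  set δ := η / ((2 * A + 1) * (K + 1))
  have hδ : 0 < δ := by positivity
  obtain ⟨f, S, hfs, hfc, hf01, hfd, hfS, hS⟩ :=
    exists_smooth_approx_indicators (totalVar F) hBm hBd K hδ
  set ω := fun x => ∑ k ∈ Finset.range K, f k x • M k
  set ω' := fun x => ∑ k ∈ Finset.range K, (B k).indicator (1 : Euc n → ℝ) x • M k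
  have hωs : ContDiff ℝ (⊤ : ℕ∞) ω := ContDiff.sum fun k _ => (hfs k).smul contDiff_const
  have ha : ∀ x, inSubdiffH h (ω x) := fun x => inSubdiffH_sum_smul hh hM (hf01 · x) (hfd x)
  have ha' : ∀ x, inSubdiffH h (ω' x) := fun x =>
    inSubdiffH_sum_smul hh hM (fun k => by by_cases hx : x ∈ B k <;> simp [hx])
      fun k _ l _ hk hl => by
        by_contra hkl
        exact disjoint_left.1 (hBd hkl) (mem_of_indicator_ne_zero hk) (mem_of_indicator_ne_zero hl)
  have hω'm : Measurable ω' := Finset.measurable_sum _ fun k _ =>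
    (measurable_one.indicator (hBm k)).smul_const _
  have hdiff : ∀ x i j, |ω x i j - ω' x i j| ≤ 2 * A := fun x i j => by
    linarith [abs_sub (ω x i j) (ω' x i j), abs_apply_le_of_inSubdiffH hh (ha x) i j,
      abs_apply_le_of_inSubdiffH hh (ha' x) i j]
  have hcomp := abs_frobInt_sub_le F
    (fun i j => integrable_apply_of_inSubdiffH hh hωs.continuous.measurable ha _ i j)
    (fun i j => integrable_apply_of_inSubdiffH hh hω'm ha' _ i j)
    (fun x hx => Finset.sum_congr rfl fun k hk => by rw [hfS x hx k hk])
    hdiff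
  have hAKδ : 2 * A * (K * δ) ≤ η := by
    calc 2 * A * (K * δ) ≤ δ * ((2 * A + 1) * (K + 1)) := by
          nlinarith [mul_nonneg hA hδ.le, mul_nonneg (Nat.cast_nonneg K : (0 : ℝ) ≤ K) hδ.le]
      _ = η := div_mul_cancel₀ η (by positivity : (2 * A + 1) * ((K : ℝ) + 1) ≠ 0)
  refine ⟨ω, hωs, ?_, ha, ?_⟩
  · refine HasCompactSupport.intro ((Finset.range K).isCompact_biUnion fun k _ => hfc k)
      fun x hx => Finset.sum_eq_zero fun k hk => ?_
    rw [image_eq_zero_of_notMem_tsupport fun hxk => hx (mem_biUnion hk hxk), zero_smul]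
  · rw [← frobInt_sum_indicator_smul F _ hBm M]
    have := mul_le_mul_of_nonneg_left hS (by positivity : 0 ≤ 2 * A)
    linarith [(abs_le.1 hcomp).1]

lemma exists_smooth_tsum_genNorm_sub_le_frobInt (hh : IsNorm h) (F : MatMeas m n)
    {B : ℕ → Set (Euc n)} (hBm : ∀ k, MeasurableSet (B k))
    (hBd : Pairwise (Function.onFun Disjoint B)) {ε : ℝ} (hε : 0 < ε) :
    ∃ ω : Euc n → Fin m → Fin n → ℝ, ContDiff ℝ (⊤ : ℕ∞) ω ∧ HasCompactSupport ω ∧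
      (∀ x, inSubdiffH h (ω x)) ∧
      ∑' k, genNorm h (fun i j => F i j (B k)) - ε ≤ frobInt F ω := by
  set g := fun k => genNorm h (fun i j => F i j (B k))
  obtain ⟨K, hK⟩ : ∃ K, ∑' k, g k - ε / 3 < ∑ k ∈ Finset.range K, g k :=
    ((summable_genNorm hh F hBm hBd).tendsto_sum_tsum_nat.eventually
      (lt_mem_nhds (by linarith))).exists
  set δ := ε / (3 * (K + 1))
  have hδ : 0 < δ := by positivity
  choose M hM hMg using fun k => exists_lt_frob hh (fun i j => F i j (B k))
    (show g k - δ < g k by linarith)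
  obtain ⟨ω, hωs, hωc, ha, hω⟩ :=
    exists_smooth_sum_frob_sub_le_frobInt hh F hBm hBd K hM (by positivity : 0 < ε / 3)
  refine ⟨ω, hωs, hωc, ha, ?_⟩
  have hKδ : K * δ ≤ ε / 3 := by
    calc K * δ ≤ (K + 1) * δ := by gcongr; linarith
      _ = ε / 3 := by simp only [δ]; field_simp
  have hsum : ∑ k ∈ Finset.range K, g k - K * δ
      ≤ ∑ k ∈ Finset.range K, frob (M k) (fun i j => F i j (B k)) := by
    simpa [Finset.sum_sub_distrib] using
      Finset.sum_le_sum fun k (_ : k ∈ Finset.range K) => (hMg k).le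
  linarith

end TotalVariationLeMass

theorem statement8_general {m n : ℕ}
    (h : (Fin m → ℝ) → ℝ) (hh : IsNorm h)
    (F : MatMeas m n) :
    sSup {r | ∃ ω : Euc n → (Fin m → Fin n → ℝ), ContDiff ℝ (⊤ : ℕ∞) ω ∧
      HasCompactSupport ω ∧ (∀ x, inSubdiffH h (ω x)) ∧
      r = ∑ i, ∑ j, sInt (F i j) fun x => ω x i j} = tvH h F := by
  have hmass : ∀ r ∈ {r | ∃ ω : Euc n → (Fin m → Fin n → ℝ), ContDiff ℝ (⊤ : ℕ∞) ω ∧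
      HasCompactSupport ω ∧ (∀ x, inSubdiffH h (ω x)) ∧
      r = ∑ i, ∑ j, sInt (F i j) fun x => ω x i j}, r ≤ tvH h F := by
    rintro _ ⟨ω, hωs, hωc, ha, rfl⟩
    exact frobInt_le_tvH hh F hωs.continuous hωc ha
  refine le_antisymm (csSup_le ⟨0, 0, contDiff_const, .zero, fun _ => inSubdiffH_zero hh,
    by simp [sInt]⟩ hmass) (csSup_le (tvH_set_nonempty F) ?_)
  rintro _ ⟨B, hBm, hBd, -, rfl⟩
  refine le_of_forall_pos_le_add fun ε hε => ?_
  obtain ⟨ω, hωs, hωc, ha, hω⟩ := exists_smooth_tsum_genNorm_sub_le_frobInt hh F hBm hBd hε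
  have hle : frobInt F ω ≤ sSup _ := le_csSup ⟨tvH h F, hmass⟩ ⟨ω, hωs, hωc, ha, rfl⟩
  linarith

/-- the Federer–Fleming `h`-mass of a finite `ℝ^{m×n}`-valued measure
(supremum of `∫ ω : dF` over smooth compactly supported `ω` of `h`-comass at most 1)
equals the total variation `|F|_H`. -/
theorem statement8 {m n : ℕ} (hm : 0 < m) (hn : 0 < n)
    (h : (Fin m → ℝ) → ℝ) (hh : IsNorm h)
    (F : MatMeas m n) :
    sSup {r | ∃ ω : Euc n → (Fin m → Fin n → ℝ), ContDiff ℝ (⊤ : ℕ∞) ω ∧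
      HasCompactSupport ω ∧ (∀ x, inSubdiffH h (ω x)) ∧
      r = ∑ i, ∑ j, sInt (F i j) fun x => ω x i j} = tvH h F :=
  statement8_general h hh F
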